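/- arXiv:2101.10770 — 11 statements merged into one kernel-verified Lean document; each statement's English description precedes it below -/
import Mathlib

section
/- Let (X,d) be a metric space, u0 ∈ X, ρ ≥ 0, and let φ : X → [0,∞) be defined by φ(u) = d(u,u0). If a self-mapping f : X → X satisfies (C1) d(u,fu) ≤ φ(u) − φ(fu) and (C2) d(fu,u0) ≥ ρ for every u ∈ C_{u0,ρ}, then the circle C_{u0,ρ} is a fixed circle of f, i.e. fu = u for all u ∈ C_{u0,ρ}. -/
theorem fixed_circle_C1_C2_general {X : Type*} [MetricSpace X] (u0 : X) (ρ : ℝ)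
    (f : X → X) (φ : X → ℝ) (hφ : ∀ u, φ u = dist u u0)
    (hC1 : ∀ u, dist u u0 = ρ → dist u (f u) ≤ φ u - φ (f u))
    (hC2 : ∀ u, dist u u0 = ρ → ρ ≤ dist (f u) u0) :
    ∀ u, dist u u0 = ρ → f u = u := by
  intro u hu
  have hdisp : dist u (f u) ≤ ρ - dist (f u) u0 := by
    simpa only [hφ, hu] using hC1 u hu
  exact (dist_le_zero.mp (by linarith [hC2 u hu])).symm

/-- Theorem (Özgür–Taş): if a self-mapping `f` of a metric space satisfies
`(C1) d(u, f u) ≤ φ(u) - φ(f u)` and `(C2) d(f u, u₀) ≥ ρ` for all `u` on the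
circle `C_{u₀,ρ} = {u : d(u,u₀) = ρ}`, where `φ(u) = d(u,u₀)`, then `C_{u₀,ρ}`
is a fixed circle of `f`. -/
theorem fixed_circle_C1_C2 {X : Type*} [MetricSpace X] (u0 : X) (ρ : ℝ) (hρ : 0 ≤ ρ)
    (f : X → X) (φ : X → ℝ) (hφ : ∀ u, φ u = dist u u0)
    (hC1 : ∀ u, dist u u0 = ρ → dist u (f u) ≤ φ u - φ (f u))
    (hC2 : ∀ u, dist u u0 = ρ → ρ ≤ dist (f u) u0) :
    ∀ u, dist u u0 = ρ → f u = u :=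
  fixed_circle_C1_C2_general u0 ρ f φ hφ hC1 hC2
end

section
/- Let (X,d) be a metric space, u0 ∈ X, ρ ≥ 0, and let φ : X → [0,∞) be defined by φ(u) = d(u,u0). If a self-mapping f : X → X satisfies (C1)* d(u,fu) ≤ φ(u) + φ(fu) − 2ρ and (C2)* d(fu,u0) ≤ ρ for every u ∈ C_{u0,ρ}, then the circle C_{u0,ρ} is a fixed circle of f, i.e. fu = u for all u ∈ C_{u0,ρ}. -/
theorem fixed_circle_C1star_C2star_general {X : Type*} [MetricSpace X] (u0 : X) (ρ : ℝ)
    (f : X → X) (φ : X → ℝ) (hφ : ∀ u, φ u = dist u u0)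
    (hC1 : ∀ u, dist u u0 = ρ → dist u (f u) ≤ φ u + φ (f u) - 2 * ρ)
    (hC2 : ∀ u, dist u u0 = ρ → dist (f u) u0 ≤ ρ) :
    ∀ u, dist u u0 = ρ → f u = u := by
  intro u hu
  have hC1u := hC1 u hu
  rw [hφ, hφ, hu] at hC1u
  have : dist u (f u) ≤ 0 := by linarith [hC2 u hu]
  exact (dist_le_zero.mp this).symm

/-- Theorem (Özgür–Taş): if a self-mapping `f` of a metric space satisfies
`(C1)* d(u, f u) ≤ φ(u) + φ(f u) - 2ρ` and `(C2)* d(f u, u₀) ≤ ρ` for all `u`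
on the circle `C_{u₀,ρ}`, where `φ(u) = d(u,u₀)`, then `C_{u₀,ρ}` is a fixed
circle of `f`. -/
theorem fixed_circle_C1star_C2star {X : Type*} [MetricSpace X] (u0 : X) (ρ : ℝ) (hρ : 0 ≤ ρ)
    (f : X → X) (φ : X → ℝ) (hφ : ∀ u, φ u = dist u u0)
    (hC1 : ∀ u, dist u u0 = ρ → dist u (f u) ≤ φ u + φ (f u) - 2 * ρ)
    (hC2 : ∀ u, dist u u0 = ρ → dist (f u) u0 ≤ ρ) :
    ∀ u, dist u u0 = ρ → f u = u :=
  fixed_circle_C1star_C2star_general u0 ρ f φ hφ hC1 hC2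
end

section
/- Let (X,d) be a metric space, u0 ∈ X, ρ ≥ 0, and let φ : X → [0,∞) be defined by φ(u) = d(u,u0). If a self-mapping f : X → X satisfies (C1)** d(u,fu) ≤ φ(u) − φ(fu) and (C2)** h·d(u,fu) + d(fu,u0) ≥ ρ for every u ∈ C_{u0,ρ} and some fixed h ∈ [0,1), then the circle C_{u0,ρ} is a fixed circle of f, i.e. fu = u for all u ∈ C_{u0,ρ}. -/
theorem eq_of_dist_le_mul_dist {X : Type*} [MetricSpace X] {x y : X} {h : ℝ} (hh : h < 1)
    (hd : dist x y ≤ h * dist x y) : x = y := by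
  have hnonpos : (1 - h) * dist x y ≤ 0 := by linarith
  have hzero : dist x y ≤ 0 := nonpos_of_mul_nonpos_right hnonpos (by linarith)
  exact dist_le_zero.mp hzero

theorem fixed_circle_C1ss_C2ss_general {X : Type*} [MetricSpace X] (u0 : X) (ρ : ℝ)
    (f : X → X) (φ : X → ℝ) (hφ : ∀ u, φ u = dist u u0)
    (h : ℝ) (hh1 : h < 1)
    (hC1 : ∀ u, dist u u0 = ρ → dist u (f u) ≤ φ u - φ (f u))
    (hC2 : ∀ u, dist u u0 = ρ → ρ ≤ h * dist u (f u) + dist (f u) u0) :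
    ∀ u, dist u u0 = ρ → f u = u := by
  intro u hu
  refine (eq_of_dist_le_mul_dist hh1 ?_).symm
  calc dist u (f u) ≤ φ u - φ (f u) := hC1 u hu
    _ = ρ - dist (f u) u0 := by rw [hφ, hφ, hu]
    _ ≤ h * dist u (f u) := by linarith [hC2 u hu]

/-- Theorem (Özgür–Taş): if a self-mapping `f` of a metric space satisfies
`(C1)** d(u, f u) ≤ φ(u) - φ(f u)` and `(C2)** h·d(u, f u) + d(f u, u₀) ≥ ρ`
for all `u` on the circle `C_{u₀,ρ}` and some fixed `h ∈ [0,1)`, where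
`φ(u) = d(u,u₀)`, then `C_{u₀,ρ}` is a fixed circle of `f`. -/
theorem fixed_circle_C1ss_C2ss {X : Type*} [MetricSpace X] (u0 : X) (ρ : ℝ) (hρ : 0 ≤ ρ)
    (f : X → X) (φ : X → ℝ) (hφ : ∀ u, φ u = dist u u0)
    (h : ℝ) (hh0 : 0 ≤ h) (hh1 : h < 1)
    (hC1 : ∀ u, dist u u0 = ρ → dist u (f u) ≤ φ u - φ (f u))
    (hC2 : ∀ u, dist u u0 = ρ → ρ ≤ h * dist u (f u) + dist (f u) u0) :
    ∀ u, dist u u0 = ρ → f u = u :=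
  fixed_circle_C1ss_C2ss_general u0 ρ f φ hφ h hh1 hC1 hC2
end

section
/- Let (X,d) be a metric space, u0 ∈ X, ρ ≥ 0, and let φ_ρ : [0,∞) → ℝ be defined by φ_ρ(x) = x − ρ for x > 0 and φ_ρ(0) = 0. If a self-mapping f : X → X satisfies (1) d(fu,u0) = ρ for each u ∈ C_{u0,ρ}, (2) d(fu,fv) > ρ for all u,v ∈ C_{u0,ρ} with u ≠ v, and (3) d(fu,fv) ≤ d(u,v) − φ_ρ(d(u,fu)) for all u,v ∈ C_{u0,ρ}, then the circle C_{u0,ρ} is a fixed circle of f, i.e. fu = u for all u ∈ C_{u0,ρ}. -/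
theorem fixed_circle_phi_rho_general {X : Type*} [MetricSpace X] (u0 : X) (ρ : ℝ)
    (f : X → X) (φρ : ℝ → ℝ)
    (hφ1 : ∀ x : ℝ, 0 < x → φρ x = x - ρ)
    (h1 : ∀ u, dist u u0 = ρ → dist (f u) u0 = ρ)
    (h2 : ∀ u v, dist u u0 = ρ → dist v u0 = ρ → u ≠ v → ρ < dist (f u) (f v))
    (h3 : ∀ u v, dist u u0 = ρ → dist v u0 = ρ →
      dist (f u) (f v) ≤ dist u v - φρ (dist u (f u))) :
    ∀ u, dist u u0 = ρ → f u = u := by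
  intro u hu
  by_contra hne
  -- Test (2) and (3) against the pair u, f u, which both lie on the circle by (1).
  have hfu : dist (f u) u0 = ρ := h1 u hu
  have hpos : 0 < dist u (f u) := dist_pos.mpr (Ne.symm hne)
  have hle : dist (f u) (f (f u)) ≤ ρ := by
    simpa only [hφ1 _ hpos, sub_sub_cancel] using h3 u (f u) hu hfu
  exact (h2 u (f u) hu hfu (Ne.symm hne)).not_ge hle

/-- Theorem (Özgür–Taş, AIP): with `φ_ρ(x) = x - ρ` for `x > 0` and `φ_ρ(0) = 0`,
if `f` satisfies (1) `d(f u, u₀) = ρ` on `C_{u₀,ρ}`, (2) `d(f u, f v) > ρ` for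
distinct `u, v ∈ C_{u₀,ρ}` and (3) `d(f u, f v) ≤ d(u,v) - φ_ρ(d(u, f u))` for
`u, v ∈ C_{u₀,ρ}`, then `C_{u₀,ρ}` is a fixed circle of `f`. -/
theorem fixed_circle_phi_rho {X : Type*} [MetricSpace X] (u0 : X) (ρ : ℝ) (hρ : 0 ≤ ρ)
    (f : X → X) (φρ : ℝ → ℝ)
    (hφ1 : ∀ x : ℝ, 0 < x → φρ x = x - ρ) (hφ2 : φρ 0 = 0)
    (h1 : ∀ u, dist u u0 = ρ → dist (f u) u0 = ρ)
    (h2 : ∀ u v, dist u u0 = ρ → dist v u0 = ρ → u ≠ v → ρ < dist (f u) (f v))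
    (h3 : ∀ u v, dist u u0 = ρ → dist v u0 = ρ →
      dist (f u) (f v) ≤ dist u v - φρ (dist u (f u))) :
    ∀ u, dist u u0 = ρ → f u = u :=
  fixed_circle_phi_rho_general u0 ρ f φρ hφ1 h1 h2 h3
end

section
/- Let (X,d) be a metric space, f : X → X a self-mapping, u0 ∈ X, ρ ≥ 0, and define θ_ρ : ℝ → ℝ by θ_ρ(x) = ρ if x = ρ and θ_ρ(x) = x + ρ otherwise. Suppose there exists L ≤ 0 such that: (1) d(fu,u0) ≤ θ_ρ(d(u,u0)) + L·d(u,fu) for every u ∈ X; (2) ρ ≤ d(fu,u0) for every u ∈ C_{u0,ρ}; (3) d(fu,fv) ≥ 2ρ for all u,v ∈ C_{u0,ρ} with u ≠ v; (4) d(fu,fv) < ρ + d(v,fu) for all u,v ∈ C_{u0,ρ} with u ≠ v. Then f fixes the circle C_{u0,ρ}, i.e. fu = u for every u ∈ C_{u0,ρ}. -/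
/-! Condition (1) at a point of the circle, where `θ_ρ` takes the value `ρ`, squeezes `d(fu, u₀)`
between `ρ` (condition (2)) and `ρ + L·d(u, fu) ≤ ρ`, so `f` maps the circle into itself. If some
`u` on the circle were moved, applying (3) and (4) to the distinct circle points `u` and `fu` would
give `2ρ ≤ d(fu, f(fu)) < ρ + d(fu, fu) = ρ`, impossible since `ρ = d(u, u₀) ≥ 0`. -/

section FixedCircle

variable {X : Type*} [PseudoMetricSpace X] {f : X → X} {u0 u : X} {ρ : ℝ}

lemma dist_map_eq_of_le_add_mul {L : ℝ} (hL : L ≤ 0)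
    (h1 : dist (f u) u0 ≤ ρ + L * dist u (f u)) (h2 : ρ ≤ dist (f u) u0) :
    dist (f u) u0 = ρ := by
  have hLd : L * dist u (f u) ≤ 0 := mul_nonpos_of_nonpos_of_nonneg hL dist_nonneg
  linarith

lemma map_eq_self_of_map_dist_eq
    (h3 : ∀ u v, dist u u0 = ρ → dist v u0 = ρ → u ≠ v → 2 * ρ ≤ dist (f u) (f v))
    (h4 : ∀ u v, dist u u0 = ρ → dist v u0 = ρ → u ≠ v →
      dist (f u) (f v) < ρ + dist v (f u))
    (hu : dist u u0 = ρ) (hfu : dist (f u) u0 = ρ) : f u = u := by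
  by_contra hne
  have hlow := h3 u (f u) hu hfu (Ne.symm hne)
  have hhigh := h4 u (f u) hu hfu (Ne.symm hne)
  rw [dist_self] at hhigh
  have hρ : 0 ≤ ρ := hu ▸ dist_nonneg
  linarith

end FixedCircle

theorem fixed_circle_theta_rho_general {X : Type*} [MetricSpace X] (u0 : X) (ρ : ℝ)
    (f : X → X) (θρ : ℝ → ℝ)
    (hθ1 : θρ ρ = ρ)
    (L : ℝ) (hL : L ≤ 0)
    (h1 : ∀ u : X, dist (f u) u0 ≤ θρ (dist u u0) + L * dist u (f u))
    (h2 : ∀ u, dist u u0 = ρ → ρ ≤ dist (f u) u0)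
    (h3 : ∀ u v, dist u u0 = ρ → dist v u0 = ρ → u ≠ v → 2 * ρ ≤ dist (f u) (f v))
    (h4 : ∀ u v, dist u u0 = ρ → dist v u0 = ρ → u ≠ v →
      dist (f u) (f v) < ρ + dist v (f u)) :
    ∀ u, dist u u0 = ρ → f u = u := by
  intro u hu
  have h1u : dist (f u) u0 ≤ ρ + L * dist u (f u) := by simpa only [hu, hθ1] using h1 u
  exact map_eq_self_of_map_dist_eq h3 h4 hu (dist_map_eq_of_le_add_mul hL h1u (h2 u hu))

/-- Theorem 2.1: with `θ_ρ(x) = ρ` if `x = ρ` and `θ_ρ(x) = x + ρ` otherwise,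
if there is `L ≤ 0` with (1) `d(f u, u₀) ≤ θ_ρ(d(u,u₀)) + L·d(u, f u)` for all
`u ∈ X`, (2) `ρ ≤ d(f u, u₀)` on `C_{u₀,ρ}`, (3) `d(f u, f v) ≥ 2ρ` for distinct
`u, v ∈ C_{u₀,ρ}`, and (4) `d(f u, f v) < ρ + d(v, f u)` for distinct
`u, v ∈ C_{u₀,ρ}`, then `f` fixes the circle `C_{u₀,ρ}`. -/
theorem fixed_circle_theta_rho {X : Type*} [MetricSpace X] (u0 : X) (ρ : ℝ) (hρ : 0 ≤ ρ)
    (f : X → X) (θρ : ℝ → ℝ)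
    (hθ1 : θρ ρ = ρ) (hθ2 : ∀ x : ℝ, x ≠ ρ → θρ x = x + ρ)
    (L : ℝ) (hL : L ≤ 0)
    (h1 : ∀ u : X, dist (f u) u0 ≤ θρ (dist u u0) + L * dist u (f u))
    (h2 : ∀ u, dist u u0 = ρ → ρ ≤ dist (f u) u0)
    (h3 : ∀ u v, dist u u0 = ρ → dist v u0 = ρ → u ≠ v → 2 * ρ ≤ dist (f u) (f v))
    (h4 : ∀ u v, dist u u0 = ρ → dist v u0 = ρ → u ≠ v →
      dist (f u) (f v) < ρ + dist v (f u)) :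
    ∀ u, dist u u0 = ρ → f u = u :=
  fixed_circle_theta_rho_general u0 ρ f θρ hθ1 L hL h1 h2 h3 h4
end

section
/- Let (X,d) be a metric space, f : X → X a self-mapping, u0 ∈ X, ρ ≥ 0, and define θ_ρ : ℝ → ℝ by θ_ρ(x) = ρ if x = ρ and θ_ρ(x) = x + ρ otherwise. Suppose there exists L ≤ 0 such that: (1) 2·d(u,u0) − d(fu,u0) ≤ θ_ρ(d(u,u0)) + L·d(u,fu) for every u ∈ X; (2) d(fu,u0) ≤ ρ for every u ∈ C_{u0,ρ}; (3) d(fu,fv) ≥ 2ρ for all u,v ∈ C_{u0,ρ} with u ≠ v; (4) d(fu,fv) < ρ + d(v,fu) for all u,v ∈ C_{u0,ρ} with u ≠ v. Then f fixes the circle C_{u0,ρ}, i.e. fu = u for every u ∈ C_{u0,ρ}. -/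
section FixedCircle

variable {X : Type*} [MetricSpace X] {u0 u : X} {ρ : ℝ} {f : X → X}

lemma dist_apply_eq_of_theta_le {θρ : ℝ → ℝ} {L : ℝ} (hθ : θρ ρ = ρ) (hL : L ≤ 0)
    (hu : dist u u0 = ρ)
    (h1 : 2 * dist u u0 - dist (f u) u0 ≤ θρ (dist u u0) + L * dist u (f u))
    (h2 : dist (f u) u0 ≤ ρ) :
    dist (f u) u0 = ρ := by
  rw [hu, hθ] at h1
  have : L * dist u (f u) ≤ 0 := mul_nonpos_of_nonpos_of_nonneg hL dist_nonneg
  exact le_antisymm h2 (by linarith)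

lemma apply_eq_self_of_dist_apply_eq (hρ : 0 ≤ ρ)
    (h3 : ∀ u v, dist u u0 = ρ → dist v u0 = ρ → u ≠ v → 2 * ρ ≤ dist (f u) (f v))
    (h4 : ∀ u v, dist u u0 = ρ → dist v u0 = ρ → u ≠ v →
      dist (f u) (f v) < ρ + dist v (f u))
    (hu : dist u u0 = ρ) (hfu : dist (f u) u0 = ρ) :
    f u = u := by
  by_contra hne
  have hlower := h3 u (f u) hu hfu (Ne.symm hne)
  have hupper := h4 u (f u) hu hfu (Ne.symm hne)
  rw [dist_self] at hupper
  linarith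

end FixedCircle

theorem fixed_circle_theta_rho'_general {X : Type*} [MetricSpace X] (u0 : X) (ρ : ℝ) (hρ : 0 ≤ ρ)
    (f : X → X) (θρ : ℝ → ℝ)
    (hθ1 : θρ ρ = ρ)
    (L : ℝ) (hL : L ≤ 0)
    (h1 : ∀ u : X, 2 * dist u u0 - dist (f u) u0 ≤ θρ (dist u u0) + L * dist u (f u))
    (h2 : ∀ u, dist u u0 = ρ → dist (f u) u0 ≤ ρ)
    (h3 : ∀ u v, dist u u0 = ρ → dist v u0 = ρ → u ≠ v → 2 * ρ ≤ dist (f u) (f v))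
    (h4 : ∀ u v, dist u u0 = ρ → dist v u0 = ρ → u ≠ v →
      dist (f u) (f v) < ρ + dist v (f u)) :
    ∀ u, dist u u0 = ρ → f u = u := fun u hu =>
  apply_eq_self_of_dist_apply_eq hρ h3 h4 hu
    (dist_apply_eq_of_theta_le hθ1 hL hu (h1 u) (h2 u hu))

/-- Theorem 2.2: with `θ_ρ(x) = ρ` if `x = ρ` and `θ_ρ(x) = x + ρ` otherwise,
if there is `L ≤ 0` with (1) `2d(u,u₀) - d(f u, u₀) ≤ θ_ρ(d(u,u₀)) + L·d(u, f u)`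
for all `u ∈ X`, (2) `d(f u, u₀) ≤ ρ` on `C_{u₀,ρ}`, (3) `d(f u, f v) ≥ 2ρ` for
distinct `u, v ∈ C_{u₀,ρ}`, and (4) `d(f u, f v) < ρ + d(v, f u)` for distinct
`u, v ∈ C_{u₀,ρ}`, then `f` fixes the circle `C_{u₀,ρ}`. -/
theorem fixed_circle_theta_rho' {X : Type*} [MetricSpace X] (u0 : X) (ρ : ℝ) (hρ : 0 ≤ ρ)
    (f : X → X) (θρ : ℝ → ℝ)
    (hθ1 : θρ ρ = ρ) (hθ2 : ∀ x : ℝ, x ≠ ρ → θρ x = x + ρ)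
    (L : ℝ) (hL : L ≤ 0)
    (h1 : ∀ u : X, 2 * dist u u0 - dist (f u) u0 ≤ θρ (dist u u0) + L * dist u (f u))
    (h2 : ∀ u, dist u u0 = ρ → dist (f u) u0 ≤ ρ)
    (h3 : ∀ u v, dist u u0 = ρ → dist v u0 = ρ → u ≠ v → 2 * ρ ≤ dist (f u) (f v))
    (h4 : ∀ u v, dist u u0 = ρ → dist v u0 = ρ → u ≠ v →
      dist (f u) (f v) < ρ + dist v (f u)) :
    ∀ u, dist u u0 = ρ → f u = u :=
  fixed_circle_theta_rho'_general u0 ρ hρ f θρ hθ1 L hL h1 h2 h3 h4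
end

section
/- Let (X,d) be a metric space, u0 ∈ X, ρ ≥ 0, and let f : X → X be a self-mapping that fixes the circle C_{u0,ρ}, which is assumed nonempty. Suppose that d(fu,fv) < max{d(v,fu), d(v,fv)} for every u ∈ C_{u0,ρ} and every v ∈ X \ C_{u0,ρ}. Then C_{u0,ρ} is the unique fixed circle of f: for any u1 ∈ X and μ ≥ 0, if f fixes the circle C_{u1,μ}, then C_{u1,μ} ⊆ C_{u0,ρ}. -/
/-- For `v ∉ S` the hypothesis at `v` would read `d(u, v) < max (d(v, u)) 0 = d(u, v)`. -/
theorem mem_of_isFixedPt_of_dist_lt_max {X : Type*} [PseudoMetricSpace X] {f : X → X}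
    {S : Set X} {u v : X} (hu : Function.IsFixedPt f u)
    (hcond : ∀ w ∉ S, dist (f u) (f w) < max (dist w (f u)) (dist w (f w)))
    (hv : Function.IsFixedPt f v) : v ∈ S := by
  by_contra hvS
  have h := hcond v hvS
  rw [hu.eq, hv.eq, dist_self, max_eq_left dist_nonneg, dist_comm] at h
  exact lt_irrefl _ h

theorem unique_fixed_circle_general {X : Type*} [MetricSpace X] (u0 : X) (ρ : ℝ)
    (f : X → X)
    (hne : ∃ u, dist u u0 = ρ)
    (hfix : ∀ u, dist u u0 = ρ → f u = u)
    (hcond : ∀ u v, dist u u0 = ρ → dist v u0 ≠ ρ →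
      dist (f u) (f v) < max (dist v (f u)) (dist v (f v))) :
    ∀ (u1 : X) (μ : ℝ), 0 ≤ μ → (∀ v, dist v u1 = μ → f v = v) →
      ∀ v, dist v u1 = μ → dist v u0 = ρ := by
  intro u1 μ _ hfix1 v hv
  obtain ⟨u, hu⟩ := hne
  exact mem_of_isFixedPt_of_dist_lt_max (S := {w | dist w u0 = ρ}) (hfix u hu)
    (fun w hw => hcond u w hu hw) (hfix1 v hv)

/-- Theorem 2.3: if `f` fixes the (nonempty) circle `C_{u₀,ρ}` and satisfies
`d(f u, f v) < max {d(v, f u), d(v, f v)}` for all `u ∈ C_{u₀,ρ}` and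
`v ∉ C_{u₀,ρ}`, then `C_{u₀,ρ}` is the unique fixed circle of `f`: any other
fixed circle `C_{u₁,μ}` is contained in `C_{u₀,ρ}`. -/
theorem unique_fixed_circle {X : Type*} [MetricSpace X] (u0 : X) (ρ : ℝ) (hρ : 0 ≤ ρ)
    (f : X → X)
    (hne : ∃ u, dist u u0 = ρ)
    (hfix : ∀ u, dist u u0 = ρ → f u = u)
    (hcond : ∀ u v, dist u u0 = ρ → dist v u0 ≠ ρ →
      dist (f u) (f v) < max (dist v (f u)) (dist v (f v))) :
    ∀ (u1 : X) (μ : ℝ), 0 ≤ μ → (∀ v, dist v u1 = μ → f v = v) →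
      ∀ v, dist v u1 = μ → dist v u0 = ρ :=
  unique_fixed_circle_general u0 ρ f hne hfix hcond
end

section
/- Let (X,d) be a metric space and f : X → X an F_c-contraction with associated point u0 ∈ X, constant t > 0 and function F ∈ 𝔽. Suppose there exists a point u ∈ X with fu ≠ u, and let σ = inf{ d(u,fu) : u ∈ X, fu ≠ u }. Then the circle C_{u0,σ} = {u ∈ X : d(u,u0) = σ} is a fixed circle of f, i.e. fu = u for every u ∈ X with d(u,u0) = σ. -/
open Filter Topology

theorem sInf_dist_apply_le_of_apply_ne {X : Type*} [PseudoMetricSpace X] {f : X → X} {u : X}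
    (hu : f u ≠ u) : sInf {d : ℝ | ∃ v : X, f v ≠ v ∧ d = dist v (f v)} ≤ dist u (f u) :=
  csInf_le ⟨0, fun _ ⟨_, _, hd⟩ => hd ▸ dist_nonneg⟩ ⟨u, hu, rfl⟩

theorem Fc_contraction_fixed_circle_general {X : Type*} [MetricSpace X]
    (f : X → X) (F : ℝ → ℝ) (t : ℝ) (u0 : X)
    (hF1 : StrictMonoOn F (Set.Ioi (0:ℝ)))
    (ht : 0 < t)
    (hFc : ∀ u : X, 0 < dist u (f u) →
      0 < dist u0 u ∧ t + F (dist u (f u)) ≤ F (dist u0 u))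
    (σ : ℝ) (hσ : σ = sInf {d : ℝ | ∃ u : X, f u ≠ u ∧ d = dist u (f u)}) :
    ∀ u : X, dist u u0 = σ → f u = u := by
  intro u hu
  by_contra hmoved
  have hdisp : 0 < dist u (f u) := dist_pos.2 (Ne.symm hmoved)
  obtain ⟨hcenter, hstep⟩ := hFc u hdisp
  have hlt : dist u (f u) < dist u0 u := (hF1.lt_iff_lt hdisp hcenter).1 (by linarith)
  have hle : σ ≤ dist u (f u) := hσ ▸ sInf_dist_apply_le_of_apply_ne hmoved
  rw [dist_comm u0, hu] at hlt
  linarith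

/-- Theorem 3.1 (first part): if `f` is an `F_c`-contraction with point `u₀`
and `σ = inf {d(u, f u) : u ∈ X, f u ≠ u}` (the infimum taken over a nonempty
set), then the circle `C_{u₀,σ}` is a fixed circle of `f`. -/
theorem Fc_contraction_fixed_circle {X : Type*} [MetricSpace X]
    (f : X → X) (F : ℝ → ℝ) (t : ℝ) (u0 : X)
    (hF1 : StrictMonoOn F (Set.Ioi (0:ℝ)))
    (hF2 : ∀ α : ℕ → ℝ, (∀ n, 0 < α n) →
      (Tendsto α atTop (𝓝 0) ↔ Tendsto (fun n => F (α n)) atTop atBot))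
    (hF3 : ∃ k : ℝ, 0 < k ∧ k < 1 ∧
      Tendsto (fun x : ℝ => x ^ k * F x) (𝓝[>] 0) (𝓝 0))
    (ht : 0 < t)
    (hFc : ∀ u : X, 0 < dist u (f u) →
      0 < dist u0 u ∧ t + F (dist u (f u)) ≤ F (dist u0 u))
    (hex : ∃ u : X, f u ≠ u)
    (σ : ℝ) (hσ : σ = sInf {d : ℝ | ∃ u : X, f u ≠ u ∧ d = dist u (f u)}) :
    ∀ u : X, dist u u0 = σ → f u = u :=
  Fc_contraction_fixed_circle_general f F t u0 hF1 ht hFc σ hσ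
end

section
/- Let (X,d) be a metric space and f : X → X an F_c-contraction with associated point u0 ∈ X, constant t > 0 and function F ∈ 𝔽. Suppose there exists a point u ∈ X with fu ≠ u, and let σ = inf{ d(u,fu) : u ∈ X, fu ≠ u }. Then for every r with 0 ≤ r < σ, the circle C_{u0,r} = {u ∈ X : d(u,u0) = r} is a fixed circle of f, i.e. fu = u for every u ∈ X with d(u,u0) = r. -/
open Filter Topology

/-! A non-fixed point `u` moves by less than its distance to `u₀`: `F` is strictly increasing and
`F (d(u, f u)) ≤ F (d(u₀, u)) - t < F (d(u₀, u))`. So on a circle of radius `r < σ` a non-fixed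
point would move by less than `σ`, contradicting the definition of `σ` as an infimum. -/

theorem dist_apply_lt_dist_of_apply_ne {X : Type*} [MetricSpace X] {f : X → X} {F : ℝ → ℝ}
    {t : ℝ} {u0 : X} (hF : StrictMonoOn F (Set.Ioi 0)) (ht : 0 < t)
    (hFc : ∀ u : X, 0 < dist u (f u) →
      0 < dist u0 u ∧ t + F (dist u (f u)) ≤ F (dist u0 u))
    {u : X} (hu : f u ≠ u) : dist u (f u) < dist u0 u := by
  have hmove : 0 < dist u (f u) := dist_pos.mpr hu.symm
  obtain ⟨hcenter, hle⟩ := hFc u hmove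
  exact (hF.lt_iff_lt hmove hcenter).mp (by linarith)

theorem sInf_displacement_le {X : Type*} [PseudoMetricSpace X] (f : X → X) {u : X}
    (hu : f u ≠ u) : sInf {d : ℝ | ∃ u : X, f u ≠ u ∧ d = dist u (f u)} ≤ dist u (f u) :=
  csInf_le ⟨0, fun _ ⟨_, _, hd⟩ => hd ▸ dist_nonneg⟩ ⟨u, hu, rfl⟩

theorem Fc_contraction_fixes_smaller_circles_general {X : Type*} [MetricSpace X]
    (f : X → X) (F : ℝ → ℝ) (t : ℝ) (u0 : X)
    (hF1 : StrictMonoOn F (Set.Ioi (0:ℝ)))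
    (ht : 0 < t)
    (hFc : ∀ u : X, 0 < dist u (f u) →
      0 < dist u0 u ∧ t + F (dist u (f u)) ≤ F (dist u0 u))
    (σ : ℝ) (hσ : σ = sInf {d : ℝ | ∃ u : X, f u ≠ u ∧ d = dist u (f u)}) :
    ∀ r : ℝ, 0 ≤ r → r < σ → ∀ u : X, dist u u0 = r → f u = u := by
  intro r _ hrσ u hur
  by_contra hu
  have hlt := dist_apply_lt_dist_of_apply_ne hF1 ht hFc hu
  have hσle := hσ ▸ sInf_displacement_le f hu
  rw [dist_comm u0, hur] at hlt
  linarith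

/-- Theorem 3.1 (second part): if `f` is an `F_c`-contraction with point `u₀`
and `σ = inf {d(u, f u) : u ∈ X, f u ≠ u}`, then `f` fixes every circle
`C_{u₀,r}` with `0 ≤ r < σ`. -/
theorem Fc_contraction_fixes_smaller_circles {X : Type*} [MetricSpace X]
    (f : X → X) (F : ℝ → ℝ) (t : ℝ) (u0 : X)
    (hF1 : StrictMonoOn F (Set.Ioi (0:ℝ)))
    (hF2 : ∀ α : ℕ → ℝ, (∀ n, 0 < α n) →
      (Tendsto α atTop (𝓝 0) ↔ Tendsto (fun n => F (α n)) atTop atBot))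
    (hF3 : ∃ k : ℝ, 0 < k ∧ k < 1 ∧
      Tendsto (fun x : ℝ => x ^ k * F x) (𝓝[>] 0) (𝓝 0))
    (ht : 0 < t)
    (hFc : ∀ u : X, 0 < dist u (f u) →
      0 < dist u0 u ∧ t + F (dist u (f u)) ≤ F (dist u0 u))
    (hex : ∃ u : X, f u ≠ u)
    (σ : ℝ) (hσ : σ = sInf {d : ℝ | ∃ u : X, f u ≠ u ∧ d = dist u (f u)}) :
    ∀ r : ℝ, 0 ≤ r → r < σ → ∀ u : X, dist u u0 = r → f u = u :=
  Fc_contraction_fixes_smaller_circles_general f F t u0 hF1 ht hFc σ hσ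
end

section
/- Let (X,d) be a metric space and let f : X → X be a surjective F_c-expanding map with associated point u0 ∈ X, constant t < 0 and function F ∈ 𝔽. If g : X → X is any map with f ∘ g equal to the identity on X, then g is an F_c-contraction with the same point u0, the function F, and the constant −t > 0; that is, for every u ∈ X with d(u,gu) > 0 one has d(u0,u) > 0 and (−t) + F(d(u,gu)) ≤ F(d(u0,u)). -/
open Filter Topology

theorem Fc_expanding_right_inverse_is_Fc_contraction_general {X : Type*} [MetricSpace X]
    (f : X → X) (F : ℝ → ℝ) (t : ℝ) (u0 : X)
    (hFe : ∀ u : X, 0 < dist u (f u) →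
      0 < dist u0 (f u) ∧ F (dist u (f u)) ≤ F (dist u0 (f u)) + t)
    (g : X → X) (hg : f ∘ g = id) :
    ∀ u : X, 0 < dist u (g u) →
      0 < dist u0 u ∧ (-t) + F (dist u (g u)) ≤ F (dist u0 u) := by
  intro u hu
  have hexp := hFe (g u)
  rw [show f (g u) = u from congrFun hg u, dist_comm (g u) u] at hexp
  obtain ⟨hpos, hle⟩ := hexp hu
  exact ⟨hpos, by linarith⟩

/-- Step in the proof of Theorem 3.2: if `f` is a surjective `F_c`-expanding
map with point `u₀`, constant `t < 0` and Wardowski function `F`, and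
`g : X → X` is a right inverse of `f` (i.e. `f ∘ g = id`), then `g` is an
`F_c`-contraction with the same point `u₀`, the same function `F`, and the
positive constant `-t`. -/
theorem Fc_expanding_right_inverse_is_Fc_contraction {X : Type*} [MetricSpace X]
    (f : X → X) (F : ℝ → ℝ) (t : ℝ) (u0 : X)
    (hF1 : StrictMonoOn F (Set.Ioi (0:ℝ)))
    (hF2 : ∀ α : ℕ → ℝ, (∀ n, 0 < α n) →
      (Tendsto α atTop (𝓝 0) ↔ Tendsto (fun n => F (α n)) atTop atBot))
    (hF3 : ∃ k : ℝ, 0 < k ∧ k < 1 ∧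
      Tendsto (fun x : ℝ => x ^ k * F x) (𝓝[>] 0) (𝓝 0))
    (ht : t < 0)
    (hsurj : Function.Surjective f)
    (hFe : ∀ u : X, 0 < dist u (f u) →
      0 < dist u0 (f u) ∧ F (dist u (f u)) ≤ F (dist u0 (f u)) + t)
    (g : X → X) (hg : f ∘ g = id) :
    ∀ u : X, 0 < dist u (g u) →
      0 < dist u0 u ∧ (-t) + F (dist u (g u)) ≤ F (dist u0 u) :=
  Fc_expanding_right_inverse_is_Fc_contraction_general f F t u0 hFe g hg
end

section
/- Define f₁ : ℂ → ℂ by f₁(z) = z if (Re z ≤ 0 and Im z ≥ 0) or (Re z ≥ 0 and Im z ≤ 0); f₁(z) = −Im z + 1/2 + i(−Re z + 1/2) if Re z > 0 and Im z > 0; and f₁(z) = −Im z − 1/2 + i(−Re z − 1/2) if Re z < 0 and Im z < 0. Then for every z = x + iy ∈ ℂ with |x| + |y| + |x + y| = 1, one has f₁(z) = z; that is, the unit circle of the norm ‖x + iy‖ = |x| + |y| + |x + y| centered at 0 is a fixed circle of f₁. -/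
/-! In the open first and third quadrants `x` and `y` have the same sign, so
`|x| + |y| + |x + y| = 2|x + y|` and the unit circle meets them along the lines `x + y = ±1/2`.
There `f₁` is the reflection `(x, y) ↦ (c - y, c - x)` in the line `x + y = c`, `c = ±1/2`,
which fixes that line pointwise; elsewhere `f₁` is the identity. -/

section

variable {α : Type*} [CommRing α] [LinearOrder α] [IsStrictOrderedRing α] {x y : α}

theorem abs_add_abs_add_abs_add_of_nonneg (hx : 0 ≤ x) (hy : 0 ≤ y) :
    |x| + |y| + |x + y| = 2 * (x + y) := by
  rw [abs_of_nonneg hx, abs_of_nonneg hy, abs_of_nonneg (add_nonneg hx hy)]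
  ring

theorem abs_add_abs_add_abs_add_of_nonpos (hx : x ≤ 0) (hy : y ≤ 0) :
    |x| + |y| + |x + y| = -2 * (x + y) := by
  rw [abs_of_nonpos hx, abs_of_nonpos hy, abs_of_nonpos (add_nonpos hx hy)]
  ring

end

theorem Complex.reflect_eq_self_of_re_add_im_eq {z : ℂ} {c : ℝ} (h : z.re + z.im = c) :
    ((-z.im + c : ℝ) : ℂ) + ((-z.re + c : ℝ) : ℂ) * Complex.I = z := by
  rw [show -z.im + c = z.re by linarith, show -z.re + c = z.im by linarith, Complex.re_add_im]

theorem quadrant_cases {α : Type*} [LinearOrder α] (a x y : α) :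
    (a < x ∧ a < y) ∨ (x < a ∧ y < a) ∨ (x ≤ a ∧ a ≤ y) ∨ (a ≤ x ∧ y ≤ a) := by
  grind

/-- The self-mapping `f₁` of `ℂ` defined piecewise (identity on the second and
fourth closed quadrants, `z ↦ -Im z + 1/2 + i(-Re z + 1/2)` on the open first
quadrant, `z ↦ -Im z - 1/2 + i(-Re z - 1/2)` on the open third quadrant) fixes
every point of the unit circle `C_{0,1}` of the norm
`‖x + iy‖ = |x| + |y| + |x + y|`. -/
theorem f1_fixes_unit_circle (f₁ : ℂ → ℂ)
    (h1 : ∀ z : ℂ, (z.re ≤ 0 ∧ 0 ≤ z.im) ∨ (0 ≤ z.re ∧ z.im ≤ 0) → f₁ z = z)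
    (h2 : ∀ z : ℂ, 0 < z.re → 0 < z.im →
      f₁ z = (-z.im + 1/2 : ℝ) + (-z.re + 1/2 : ℝ) * Complex.I)
    (h3 : ∀ z : ℂ, z.re < 0 → z.im < 0 →
      f₁ z = (-z.im - 1/2 : ℝ) + (-z.re - 1/2 : ℝ) * Complex.I) :
    ∀ z : ℂ, |z.re| + |z.im| + |z.re + z.im| = 1 → f₁ z = z := by
  intro z hz
  rcases quadrant_cases 0 z.re z.im with ⟨hx, hy⟩ | ⟨hx, hy⟩ | hq | hq
  · rw [abs_add_abs_add_abs_add_of_nonneg hx.le hy.le] at hz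
    rw [h2 z hx hy]
    exact Complex.reflect_eq_self_of_re_add_im_eq (by linarith)
  · rw [abs_add_abs_add_abs_add_of_nonpos hx.le hy.le] at hz
    rw [h3 z hx hy, sub_eq_add_neg, sub_eq_add_neg]
    exact Complex.reflect_eq_self_of_re_add_im_eq (by linarith)
  · exact h1 z (Or.inl hq)
  · exact h1 z (Or.inr hq)
end
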